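/- For n ≥ 4, let 𝔼_n = {α ∈ ℍ_ε^⊥ : (α,α,ε) = 0}, let P(n) = {(a,b) ∈ Ã_n × Ã_n : a and b are ℂ-collinear}, and let X̄_n = {(a,b) ∈ Ã_n × Ã_n : a ≠ 0, b ≠ 0 and ab = 0}. Then: (i) P(n) ⊆ 𝔼_n, X̄_n ⊆ 𝔼_n, and P(n) ∩ X̄_n = ∅; (ii) the map R : 𝔼_n ∖ P(n) → X̄_n defined by R(a,b) = (a,d), where b = c + d is the orthogonal decomposition with c ∈ ℍ_a and d ∈ ℍ_a^⊥, is a well-defined continuous retraction: ad = 0 with a ≠ 0 and d ≠ 0, and R(a,b) = (a,b) whenever (a,b) ∈ X̄_n. -/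

import Mathlib

noncomputable section

/-- The Cayley–Dickson algebra `A n` of dimension `2^n` over `ℝ`:
`A 0 = ℝ` and `A (n+1) = A n × A n`. -/
def CD : ℕ → Type
  | 0 => ℝ
  | n + 1 => CD n × CD n

namespace CD

instance instAddCommGroup : (n : ℕ) → AddCommGroup (CD n)
  | 0 => inferInstanceAs (AddCommGroup ℝ)
  | n + 1 =>
    letI := instAddCommGroup n
    inferInstanceAs (AddCommGroup (CD n × CD n))

instance instModule : (n : ℕ) → Module ℝ (CD n)
  | 0 => inferInstanceAs (Module ℝ ℝ)
  | n + 1 =>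
    letI := instAddCommGroup n
    letI := instModule n
    inferInstanceAs (Module ℝ (CD n × CD n))

/-- Conjugation: `x̄ = x` on `ℝ` and `(x₁,x₂)‾ = (x̄₁, -x₂)`. -/
protected def conj : {n : ℕ} → CD n → CD n
  | 0, x => x
  | _ + 1, x => (CD.conj x.1, -x.2)

/-- Cayley–Dickson multiplication: `(a,b)(x,y) = (ax - ȳb, ya + bx̄)`. -/
protected def mul : {n : ℕ} → CD n → CD n → CD n
  | 0, x, y => (show ℝ from x) * (show ℝ from y)
  | _ + 1, x, y =>
    (CD.mul x.1 y.1 - CD.mul (CD.conj y.2) x.2,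
     CD.mul y.2 x.1 + CD.mul x.2 (CD.conj y.1))

instance instMul (n : ℕ) : Mul (CD n) := ⟨CD.mul⟩

/-- The multiplicative unit `e₀` of `A n`. -/
def e0 : (n : ℕ) → CD n
  | 0 => (1 : ℝ)
  | n + 1 => (e0 n, 0)

/-- The element `ẽ₀ = (0, e₀)` of `A n` (junk value `0` for `n = 0`). -/
def te0 : (n : ℕ) → CD n
  | 0 => 0
  | n + 1 => (0, e0 n)

/-- The "complexification" `α̃ = (-b, a)` of `α = (a,b)` (junk value `0` for `n = 0`);
note `α̃ = α·ẽ₀`. -/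
def tilde : {n : ℕ} → CD n → CD n
  | 0, _ => 0
  | _ + 1, x => (-x.2, x.1)

/-- The standard inner product on `A n ≅ ℝ^{2^n}`. -/
protected def inner : {n : ℕ} → CD n → CD n → ℝ
  | 0, x, y => (show ℝ from x) * (show ℝ from y)
  | _ + 1, x, y => CD.inner x.1 y.1 + CD.inner x.2 y.2

/-- The euclidean norm on `A n`. -/
protected def norm {n : ℕ} (x : CD n) : ℝ := Real.sqrt (CD.inner x x)

/-- `x` is pure if its trace `t(x) = x + x̄` vanishes. -/
def IsPure {n : ℕ} (x : CD n) : Prop := x + CD.conj x = 0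

/-- `x = (a,b)` is doubly pure if both `a` and `b` are pure
(equivalently, both `x` and `x̃` are pure). -/
def IsDoublyPure : {n : ℕ} → CD n → Prop
  | 0, x => x = 0
  | _ + 1, x => IsPure x.1 ∧ IsPure x.2

/-- The associator `(x,y,z) = (xy)z - x(yz)`. -/
def assoc {n : ℕ} (x y z : CD n) : CD n := (x * y) * z - x * (y * z)

/-- The subspace `ℍ_a`: the real span of `{e₀, ã, a, ẽ₀}`. -/
def Ha {n : ℕ} (a : CD n) : Submodule ℝ (CD n) :=
  Submodule.span ℝ {e0 n, tilde a, a, te0 n}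

/-- The orthogonal complement `ℍ_a^⊥` of `ℍ_a` in `A n`. -/
def HaPerp {n : ℕ} (a : CD n) : Set (CD n) :=
  {x | ∀ y ∈ Ha a, CD.inner x y = 0}

/-- The element `ε = (ẽ₀, 0)` of `A (n+1)`. -/
def eps (n : ℕ) : CD (n + 1) := (te0 n, 0)

/-- `α̂ = (b,a)` for `α = (a,b) ∈ A (n+1)`. -/
def hat {n : ℕ} (x : CD (n + 1)) : CD (n + 1) := (x.2, x.1)

/-- The element `(a, b)` of `A (n+1) = A n × A n`. -/
def pair {n : ℕ} (a b : CD n) : CD (n + 1) := (a, b)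

end CD

namespace CD
instance instTopologicalSpace : (n : ℕ) → TopologicalSpace (CD n)
  | 0 => inferInstanceAs (TopologicalSpace ℝ)
  | n + 1 =>
    letI := instTopologicalSpace n
    inferInstanceAs (TopologicalSpace (CD n × CD n))
end CD

/-- `𝔼_n = {α ∈ ℍ_ε^⊥ : (α,α,ε) = 0}`. -/
def En (n : ℕ) : Set (CD (n + 1)) :=
  {α | α ∈ CD.HaPerp (CD.eps n) ∧ CD.assoc α α (CD.eps n) = 0}

/-- `P(n)`: pairs of doubly pure elements that are `ℂ`-collinear (for the complex
structure `i·a = ã`). -/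
def Pn (n : ℕ) : Set (CD (n + 1)) :=
  {α | CD.IsDoublyPure α.1 ∧ CD.IsDoublyPure α.2 ∧
    (α.2 ∈ Submodule.span ℝ {α.1, CD.tilde α.1} ∨
     α.1 ∈ Submodule.span ℝ {α.2, CD.tilde α.2})}

/-- `X̄_n`: pairs of nonzero doubly pure elements with `ab = 0`. -/
def Xbar (n : ℕ) : Set (CD (n + 1)) :=
  {α | CD.IsDoublyPure α.1 ∧ CD.IsDoublyPure α.2 ∧
    α.1 ≠ 0 ∧ α.2 ≠ 0 ∧ α.1 * α.2 = 0}


/-!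
For doubly pure `a, b ∈ A_n` the associator `T(a, b) = (a, ẽ₀, b) = ã b + a b̃` is
antisymmetric, and `(α, α, ε) = (0, -T(a, b))` for `α = (a, b)`, so `𝔼_n` is cut out by
`T(a, b) = 0`. The map `T(a, ·)` vanishes on the complex line `span_ℝ {a, ã}`, while for
`d ⊥ a, ã` the anticommutator identity `x y + y x = -2⟨x, y⟩ e₀` of pure elements gives
`T(a, d) = -2 (a d)~`. If `a b = 0`, then `b ⊥ a, ã`, so `T(a, b) = 0`, and `b` cannot be a
nonzero point of the line of `a` (nor `a` of the line of `b`). Conversely, if `T(a, b) = 0` and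
`b` is off the line of `a`, its `ℍ_a^⊥`-component `d` is nonzero with `T(a, d) = T(a, b) = 0`,
that is `a d = 0`.
-/
namespace CD

variable {n : ℕ}

@[ext] theorem ext {x y : CD (n + 1)} (h₁ : x.1 = y.1) (h₂ : x.2 = y.2) : x = y :=
  Prod.ext h₁ h₂

@[simp] theorem fst_add (x y : CD (n + 1)) : (x + y).1 = x.1 + y.1 := rfl
@[simp] theorem snd_add (x y : CD (n + 1)) : (x + y).2 = x.2 + y.2 := rfl
@[simp] theorem fst_neg (x : CD (n + 1)) : (-x).1 = -x.1 := rfl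
@[simp] theorem snd_neg (x : CD (n + 1)) : (-x).2 = -x.2 := rfl
@[simp] theorem fst_sub (x y : CD (n + 1)) : (x - y).1 = x.1 - y.1 := rfl
@[simp] theorem snd_sub (x y : CD (n + 1)) : (x - y).2 = x.2 - y.2 := rfl
@[simp] theorem fst_zero : (0 : CD (n + 1)).1 = 0 := rfl
@[simp] theorem snd_zero : (0 : CD (n + 1)).2 = 0 := rfl
@[simp] theorem fst_smul (r : ℝ) (x : CD (n + 1)) : (r • x).1 = r • x.1 := rfl
@[simp] theorem snd_smul (r : ℝ) (x : CD (n + 1)) : (r • x).2 = r • x.2 := rfl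
@[simp] theorem fst_mul (x y : CD (n + 1)) : (x * y).1 = x.1 * y.1 - CD.conj y.2 * x.2 := rfl
@[simp] theorem snd_mul (x y : CD (n + 1)) : (x * y).2 = y.2 * x.1 + x.2 * CD.conj y.1 := rfl
@[simp] theorem fst_conj (x : CD (n + 1)) : (CD.conj x).1 = CD.conj x.1 := rfl
@[simp] theorem snd_conj (x : CD (n + 1)) : (CD.conj x).2 = -x.2 := rfl
@[simp] theorem fst_tilde (x : CD (n + 1)) : (tilde x).1 = -x.2 := rfl
@[simp] theorem snd_tilde (x : CD (n + 1)) : (tilde x).2 = x.1 := rfl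
@[simp] theorem fst_e0 : (e0 (n + 1)).1 = e0 n := rfl
@[simp] theorem snd_e0 : (e0 (n + 1)).2 = 0 := rfl
@[simp] theorem fst_te0 : (te0 (n + 1)).1 = 0 := rfl
@[simp] theorem snd_te0 : (te0 (n + 1)).2 = e0 n := rfl
@[simp] theorem fst_pair (a b : CD n) : (pair a b).1 = a := rfl
@[simp] theorem snd_pair (a b : CD n) : (pair a b).2 = b := rfl
@[simp] theorem fst_eps : (eps n).1 = te0 n := rfl
@[simp] theorem snd_eps : (eps n).2 = 0 := rfl

theorem inner_succ (x y : CD (n + 1)) : CD.inner x y = CD.inner x.1 y.1 + CD.inner x.2 y.2 := rfl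

protected theorem conj_add : ∀ {n} (x y : CD n), CD.conj (x + y) = CD.conj x + CD.conj y
  | 0, _, _ => rfl
  | _ + 1, x, y => by ext <;> simp [CD.conj_add x.1 y.1, add_comm]

protected theorem conj_smul : ∀ {n} (r : ℝ) (x : CD n), CD.conj (r • x) = r • CD.conj x
  | 0, _, _ => rfl
  | _ + 1, r, x => by ext <;> simp [CD.conj_smul r x.1]

def conjₗ (n : ℕ) : CD n →ₗ[ℝ] CD n where
  toFun := CD.conj
  map_add' := CD.conj_add
  map_smul' := CD.conj_smul

@[simp] protected theorem conj_zero : CD.conj (0 : CD n) = 0 := map_zero (conjₗ n)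
@[simp] protected theorem conj_neg (x : CD n) : CD.conj (-x) = -CD.conj x := map_neg (conjₗ n) x

@[simp] protected theorem conj_conj : ∀ {n} (x : CD n), CD.conj (CD.conj x) = x
  | 0, _ => rfl
  | _ + 1, x => by ext <;> simp [CD.conj_conj x.1]

@[simp] theorem conj_e0 : ∀ {n}, CD.conj (e0 n) = e0 n
  | 0 => rfl
  | n + 1 => by ext <;> simp [conj_e0 (n := n)]

protected theorem inner_comm : ∀ {n} (x y : CD n), CD.inner x y = CD.inner y x
  | 0, x, y => mul_comm (G := ℝ) x y
  | _ + 1, x, y => by simp [inner_succ, CD.inner_comm x.1, CD.inner_comm x.2]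

protected theorem inner_add_left : ∀ {n} (x y z : CD n),
    CD.inner (x + y) z = CD.inner x z + CD.inner y z
  | 0, x, y, z => add_mul (R := ℝ) x y z
  | _ + 1, x, y, z => by
    simp only [inner_succ, fst_add, snd_add, CD.inner_add_left x.1, CD.inner_add_left x.2]
    ring

protected theorem inner_smul_left : ∀ {n} (r : ℝ) (x y : CD n),
    CD.inner (r • x) y = r * CD.inner x y
  | 0, r, x, y => mul_assoc (G := ℝ) r x y
  | _ + 1, r, x, y => by
    simp only [inner_succ, fst_smul, snd_smul, CD.inner_smul_left r x.1, CD.inner_smul_left r x.2]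
    ring

def innerₗ (n : ℕ) : CD n →ₗ[ℝ] CD n →ₗ[ℝ] ℝ :=
  LinearMap.mk₂ ℝ CD.inner CD.inner_add_left CD.inner_smul_left
    (fun x y z => by simp only [CD.inner_comm x, CD.inner_add_left])
    (fun r x y => by simp only [CD.inner_comm x, CD.inner_smul_left, smul_eq_mul])

@[simp] theorem innerₗ_apply (x y : CD n) : innerₗ n x y = CD.inner x y := rfl

@[simp] protected theorem inner_zero_left (x : CD n) : CD.inner 0 x = 0 :=
  LinearMap.map_zero₂ (innerₗ n) x
@[simp] protected theorem inner_zero_right (x : CD n) : CD.inner x 0 = 0 := (innerₗ n x).map_zero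
protected theorem inner_add_right (x y z : CD n) :
    CD.inner x (y + z) = CD.inner x y + CD.inner x z := (innerₗ n x).map_add y z
protected theorem inner_smul_right (r : ℝ) (x y : CD n) :
    CD.inner x (r • y) = r * CD.inner x y := (innerₗ n x).map_smul r y
protected theorem inner_neg_left (x y : CD n) : CD.inner (-x) y = -CD.inner x y :=
  LinearMap.map_neg₂ (innerₗ n) x y
protected theorem inner_neg_right (x y : CD n) : CD.inner x (-y) = -CD.inner x y :=
  (innerₗ n x).map_neg y
protected theorem inner_sub_left (x y z : CD n) :
    CD.inner (x - y) z = CD.inner x z - CD.inner y z := LinearMap.map_sub₂ (innerₗ n) x y z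

protected theorem inner_self_nonneg : ∀ {n} (x : CD n), 0 ≤ CD.inner x x
  | 0, x => mul_self_nonneg (R := ℝ) x
  | _ + 1, x => add_nonneg (CD.inner_self_nonneg x.1) (CD.inner_self_nonneg x.2)

@[simp] protected theorem inner_self_eq_zero : ∀ {n} {x : CD n}, CD.inner x x = 0 ↔ x = 0
  | 0, x => mul_self_eq_zero (M₀ := ℝ) (a := x)
  | _ + 1, x => by
    rw [inner_succ, add_eq_zero_iff_of_nonneg (CD.inner_self_nonneg _) (CD.inner_self_nonneg _),
      CD.inner_self_eq_zero, CD.inner_self_eq_zero]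
    exact ⟨fun h => ext h.1 h.2, fun h => ⟨congrArg Prod.fst h, congrArg Prod.snd h⟩⟩

@[simp] theorem inner_conj_conj : ∀ {n} (x y : CD n),
    CD.inner (CD.conj x) (CD.conj y) = CD.inner x y
  | 0, _, _ => rfl
  | _ + 1, x, y => by
    simp [inner_succ, inner_conj_conj x.1, CD.inner_neg_left, CD.inner_neg_right]

mutual
protected theorem mul_add : ∀ {n} (x y z : CD n), x * (y + z) = x * y + x * z
  | 0, x, y, z => mul_add (R := ℝ) x y z
  | n + 1, x, y, z => by
    ext <;> simp only [fst_mul, snd_mul, fst_add, snd_add, CD.conj_add, @CD.mul_add n,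
      @CD.add_mul n] <;> abel

protected theorem add_mul : ∀ {n} (x y z : CD n), (x + y) * z = x * z + y * z
  | 0, x, y, z => add_mul (R := ℝ) x y z
  | n + 1, x, y, z => by
    ext <;> simp only [fst_mul, snd_mul, fst_add, snd_add, @CD.mul_add n, @CD.add_mul n] <;> abel
end

mutual
protected theorem mul_smul_comm : ∀ {n} (r : ℝ) (x y : CD n), x * (r • y) = r • (x * y)
  | 0, r, x, y => mul_left_comm (G := ℝ) x r y
  | n + 1, r, x, y => by
    ext <;> simp only [fst_mul, snd_mul, fst_smul, snd_smul, CD.conj_smul, @CD.mul_smul_comm n,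
      @CD.smul_mul_assoc n, smul_sub, smul_add]

protected theorem smul_mul_assoc : ∀ {n} (r : ℝ) (x y : CD n), (r • x) * y = r • (x * y)
  | 0, r, x, y => mul_assoc (G := ℝ) r x y
  | n + 1, r, x, y => by
    ext <;> simp only [fst_mul, snd_mul, fst_smul, snd_smul, @CD.mul_smul_comm n,
      @CD.smul_mul_assoc n, smul_sub, smul_add]
end

instance instNonUnitalNonAssocRing (n : ℕ) : NonUnitalNonAssocRing (CD n) :=
  { instAddCommGroup n, instMul n with
    left_distrib := CD.mul_add
    right_distrib := CD.add_mul
    zero_mul := fun x => by simpa using CD.add_mul 0 0 x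
    mul_zero := fun x => by simpa using CD.mul_add x 0 0 }

instance instIsScalarTower (n : ℕ) : IsScalarTower ℝ (CD n) (CD n) :=
  ⟨fun r x y => CD.smul_mul_assoc r x y⟩

instance instSMulCommClass (n : ℕ) : SMulCommClass ℝ (CD n) (CD n) :=
  ⟨fun r x y => (CD.mul_smul_comm r x y).symm⟩

@[simp] theorem mul_e0 : ∀ {n} (x : CD n), x * e0 n = x
  | 0, x => mul_one (M := ℝ) x
  | n + 1, x => by ext <;> simp [@mul_e0 n]

@[simp] theorem e0_mul : ∀ {n} (x : CD n), e0 n * x = x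
  | 0, x => one_mul (M := ℝ) x
  | n + 1, x => by ext <;> simp [@e0_mul n]

theorem conj_mul_self : ∀ {n} (x : CD n), CD.conj x * x = CD.inner x x • e0 n
  | 0, x => (mul_one (M := ℝ) _).symm
  | n + 1, x => by ext <;> simp [@conj_mul_self n, inner_succ, add_smul]

theorem conj_mul_add_conj_mul (x y : CD n) :
    CD.conj x * y + CD.conj y * x = (2 * CD.inner x y) • e0 n := by
  have h := conj_mul_self (x + y)
  simp only [CD.conj_add, add_mul, mul_add, conj_mul_self, CD.inner_add_left,
    CD.inner_add_right, CD.inner_comm y x] at h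
  linear_combination (norm := module) h

theorem inner_mul_e0 : ∀ {n} (x y : CD n), CD.inner (x * y) (e0 n) = CD.inner x (CD.conj y)
  | 0, x, y => mul_one (M := ℝ) _
  | n + 1, x, y => by
    simp only [inner_succ, fst_mul, snd_mul, fst_e0, snd_e0, fst_conj, snd_conj,
      CD.inner_zero_right, CD.inner_sub_left, CD.inner_neg_right, @inner_mul_e0 n,
      inner_conj_conj, CD.inner_comm y.2]
    ring

theorem isPure_iff {x : CD n} : IsPure x ↔ CD.conj x = -x := by
  rw [IsPure, add_comm, eq_neg_iff_add_eq_zero]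

theorem isPure_iff_inner_e0 : ∀ {n} {x : CD n}, IsPure x ↔ CD.inner x (e0 n) = 0
  | 0, x => by
    revert x
    show ∀ x : ℝ, x + x = 0 ↔ x * 1 = 0
    intro x
    constructor <;> intro h <;> linarith
  | n + 1, x => by
    rw [inner_succ, fst_e0, snd_e0, CD.inner_zero_right, add_zero, ← @isPure_iff_inner_e0 n]
    simp [IsPure, CD.ext_iff]

theorem mul_add_mul_of_isPure {x y : CD n} (hx : IsPure x) (hy : IsPure y) :
    x * y + y * x = (-2 * CD.inner x y) • e0 n := by
  have h := conj_mul_add_conj_mul x y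
  rw [isPure_iff.mp hx, isPure_iff.mp hy, neg_mul, neg_mul] at h
  linear_combination (norm := module) -h

theorem mul_self_of_isPure {x : CD n} (hx : IsPure x) : x * x = -CD.inner x x • e0 n := by
  have h := conj_mul_self x
  rw [isPure_iff.mp hx, neg_mul] at h
  linear_combination (norm := module) -h

@[simp] theorem tilde_add (x y : CD (n + 1)) : tilde (x + y) = tilde x + tilde y := by
  ext <;> simp only [fst_tilde, snd_tilde, fst_add, snd_add, neg_add]

@[simp] theorem tilde_smul (r : ℝ) (x : CD (n + 1)) : tilde (r • x) = r • tilde x := by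
  ext <;> simp

@[simp] theorem tilde_neg (x : CD (n + 1)) : tilde (-x) = -tilde x := rfl

@[simp] theorem tilde_sub (x y : CD (n + 1)) : tilde (x - y) = tilde x - tilde y := by
  simp [sub_eq_add_neg]

@[simp] theorem tilde_zero : tilde (0 : CD (n + 1)) = 0 := by ext <;> simp

@[simp] theorem tilde_tilde (x : CD (n + 1)) : tilde (tilde x) = -x := rfl

@[simp] theorem tilde_eq_zero {x : CD (n + 1)} : tilde x = 0 ↔ x = 0 :=
  ⟨fun h => by simpa using congrArg tilde h, fun h => h ▸ tilde_zero⟩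

@[simp] theorem tilde_e0 : tilde (e0 (n + 1)) = te0 (n + 1) := by ext <;> simp

@[simp] theorem conj_te0 : CD.conj (te0 (n + 1)) = -te0 (n + 1) := by ext <;> simp

theorem inner_tilde_tilde (x y : CD (n + 1)) : CD.inner (tilde x) (tilde y) = CD.inner x y := by
  simp [inner_succ, CD.inner_neg_left, CD.inner_neg_right, add_comm]

theorem inner_tilde_left (x y : CD (n + 1)) :
    CD.inner (tilde x) y = -CD.inner x (tilde y) := by
  simp [inner_succ, CD.inner_neg_left, CD.inner_comm x.1, CD.inner_comm x.2]

theorem inner_tilde_self (x : CD (n + 1)) : CD.inner (tilde x) x = 0 := by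
  have h := inner_tilde_left x x
  rw [CD.inner_comm x] at h
  linarith

theorem mul_te0 (x : CD (n + 1)) : x * te0 (n + 1) = tilde x := by
  ext <;> simp

theorem isDoublyPure_iff_inner {x : CD (n + 1)} :
    IsDoublyPure x ↔ CD.inner x (e0 (n + 1)) = 0 ∧ CD.inner x (te0 (n + 1)) = 0 := by
  simp [IsDoublyPure, inner_succ, isPure_iff_inner_e0]

namespace IsDoublyPure

variable {x : CD (n + 1)}

theorem conj_eq (h : IsDoublyPure x) : CD.conj x = -x := by
  ext
  · exact isPure_iff.mp h.1
  · rfl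

theorem isPure (h : IsDoublyPure x) : IsPure x := isPure_iff.mpr h.conj_eq

theorem tilde (h : IsDoublyPure x) : IsDoublyPure (tilde x) :=
  ⟨isPure_iff.mpr (by simp [isPure_iff.mp h.2]), h.1⟩

end IsDoublyPure

theorem te0_mul_of_isDoublyPure {x : CD (n + 1)} (h : IsDoublyPure x) :
    te0 (n + 1) * x = -tilde x := by
  ext <;> simp [isPure_iff.mp h.1, isPure_iff.mp h.2]

theorem mul_tilde_self {a : CD (n + 1)} (ha : IsDoublyPure a) :
    a * tilde a = -CD.inner a a • te0 (n + 1) := by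
  ext
  · simp [isPure_iff.mp ha.1]
  · simp [isPure_iff.mp ha.2, mul_self_of_isPure ha.1, mul_self_of_isPure ha.2, inner_succ,
      add_smul, add_comm]

theorem tilde_mul_self {a : CD (n + 1)} (ha : IsDoublyPure a) :
    tilde a * a = CD.inner a a • te0 (n + 1) := by
  ext
  · simp [isPure_iff.mp ha.2]
  · simp [isPure_iff.mp ha.1, mul_self_of_isPure ha.1, mul_self_of_isPure ha.2, inner_succ,
      add_smul, add_comm]

theorem assoc_add_right (x y z w : CD n) : assoc x y (z + w) = assoc x y z + assoc x y w := by
  simp only [assoc, mul_add]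
  abel

theorem assoc_smul_right (r : ℝ) (x y z : CD n) : assoc x y (r • z) = r • assoc x y z := by
  simp only [assoc, mul_smul_comm, smul_sub]

theorem assoc_sub_right (x y z w : CD n) : assoc x y (z - w) = assoc x y z - assoc x y w := by
  simp only [assoc, mul_sub]
  abel

theorem assoc_te0 (a : CD (n + 1)) {b : CD (n + 1)} (hb : IsDoublyPure b) :
    assoc a (te0 (n + 1)) b = tilde a * b + a * tilde b := by
  rw [assoc, mul_te0, te0_mul_of_isDoublyPure hb, mul_neg, sub_neg_eq_add]

theorem assoc_te0_swap {a b : CD (n + 1)} (ha : IsDoublyPure a) (hb : IsDoublyPure b) :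
    assoc b (te0 (n + 1)) a = -assoc a (te0 (n + 1)) b := by
  have h₁ := mul_add_mul_of_isPure ha.tilde.isPure hb.isPure
  have h₂ := mul_add_mul_of_isPure ha.isPure hb.tilde.isPure
  rw [inner_tilde_left] at h₁
  rw [assoc_te0 _ ha, assoc_te0 _ hb]
  linear_combination (norm := module) h₁ + h₂

theorem assoc_te0_eq_zero_of_mem_span {a b : CD (n + 1)} (ha : IsDoublyPure a)
    (hb : b ∈ Submodule.span ℝ {a, tilde a}) : assoc a (te0 (n + 1)) b = 0 := by
  obtain ⟨r, s, rfl⟩ := Submodule.mem_span_pair.mp hb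
  have h₁ : assoc a (te0 (n + 1)) a = 0 := by
    rw [assoc_te0 _ ha, tilde_mul_self ha, mul_tilde_self ha]
    module
  have h₂ : assoc a (te0 (n + 1)) (tilde a) = 0 := by
    rw [assoc_te0 _ ha.tilde, tilde_tilde, mul_neg, mul_self_of_isPure ha.tilde.isPure,
      mul_self_of_isPure ha.isPure, inner_tilde_tilde]
    module
  simp [assoc_add_right, assoc_smul_right, h₁, h₂]

theorem assoc_te0_of_inner_eq_zero {a d : CD (n + 1)} (ha : IsDoublyPure a)
    (hd : IsDoublyPure d) (h₁ : CD.inner d a = 0) (h₂ : CD.inner d (tilde a) = 0) :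
    assoc a (te0 (n + 1)) d = (-2 : ℝ) • tilde (a * d) := by
  have hs₁ : CD.inner a.2 d.1 = CD.inner a.1 d.2 := by
    simp only [inner_succ, fst_tilde, snd_tilde, CD.inner_neg_right] at h₂
    linarith [CD.inner_comm a.2 d.1, CD.inner_comm a.1 d.2]
  have hs₂ : CD.inner a.2 d.2 = -CD.inner a.1 d.1 := by
    rw [inner_succ] at h₁
    linarith [CD.inner_comm a.1 d.1, CD.inner_comm a.2 d.2]
  have h₂₁ := mul_add_mul_of_isPure ha.2 hd.1
  have h₁₂ := mul_add_mul_of_isPure ha.1 hd.2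
  have h₁₁ := mul_add_mul_of_isPure ha.1 hd.1
  have h₂₂ := mul_add_mul_of_isPure ha.2 hd.2
  rw [hs₁] at h₂₁
  rw [hs₂] at h₂₂
  rw [assoc_te0 _ hd]
  ext <;> simp only [fst_add, snd_add, fst_mul, snd_mul, fst_tilde, snd_tilde, fst_smul, snd_smul,
    CD.conj_neg, isPure_iff.mp hd.1, isPure_iff.mp hd.2, neg_mul, mul_neg, neg_neg]
  · linear_combination (norm := module) h₂₁ - h₁₂
  · linear_combination (norm := module) h₁₁ + h₂₂

theorem inner_mul_te0_of_isDoublyPure {a : CD (n + 1)} (ha : IsDoublyPure a)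
    (b : CD (n + 1)) : CD.inner (a * b) (te0 (n + 1)) = -CD.inner b (tilde a) := by
  simp [inner_succ, CD.inner_add_left, inner_mul_e0, isPure_iff.mp ha.1, CD.inner_neg_left,
    CD.inner_neg_right, CD.inner_comm b.2, CD.inner_comm a.2]

theorem inner_eq_zero_of_mul_eq_zero {a b : CD (n + 1)} (ha : IsDoublyPure a)
    (hb : IsDoublyPure b) (hab : a * b = 0) :
    CD.inner b a = 0 ∧ CD.inner b (tilde a) = 0 := by
  have h₁ := inner_mul_e0 a b
  have h₂ := inner_mul_te0_of_isDoublyPure ha b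
  rw [hab, CD.inner_zero_left, hb.conj_eq, CD.inner_neg_right, CD.inner_comm] at h₁
  rw [hab, CD.inner_zero_left] at h₂
  constructor <;> linarith

theorem mem_HaPerp_iff {a x : CD n} : x ∈ HaPerp a ↔ CD.inner x (e0 n) = 0 ∧
    CD.inner x (tilde a) = 0 ∧ CD.inner x a = 0 ∧ CD.inner x (te0 n) = 0 := by
  change Ha a ≤ LinearMap.ker (innerₗ n x) ↔ _
  simp [Ha, Submodule.span_le, Set.insert_subset_iff]

theorem mem_HaPerp_eps_iff {α : CD (n + 2)} :
    α ∈ HaPerp (eps (n + 1)) ↔ IsDoublyPure α.1 ∧ IsDoublyPure α.2 := by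
  rw [mem_HaPerp_iff]
  simp only [isDoublyPure_iff_inner, inner_succ, fst_e0, snd_e0, fst_te0, snd_te0, fst_eps,
    snd_eps, fst_tilde, snd_tilde, fst_zero, snd_zero, neg_zero, CD.inner_zero_right, add_zero,
    zero_add]
  tauto

theorem assoc_self_self_eps {α : CD (n + 2)} (h₁ : IsDoublyPure α.1)
    (h₂ : IsDoublyPure α.2) :
    assoc α α (eps (n + 1)) = pair 0 (-assoc α.1 (te0 (n + 1)) α.2) := by
  rw [← assoc_te0_swap h₁ h₂, assoc_te0 _ h₁]
  ext : 1
  · simp [assoc, h₁.conj_eq, h₂.conj_eq, h₂.tilde.conj_eq, mul_te0, mul_tilde_self h₁,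
      tilde_mul_self h₂, mul_self_of_isPure h₁.isPure, mul_self_of_isPure h₂.isPure]
  · simp [assoc, h₁.conj_eq, h₂.conj_eq, h₁.tilde.conj_eq, mul_te0, add_comm]

theorem mem_En_iff {α : CD (n + 2)} : α ∈ En (n + 1) ↔
    IsDoublyPure α.1 ∧ IsDoublyPure α.2 ∧ assoc α.1 (te0 (n + 1)) α.2 = 0 := by
  rw [En, Set.mem_ofPred_eq, mem_HaPerp_eps_iff]
  constructor
  · rintro ⟨⟨h₁, h₂⟩, h⟩
    rw [assoc_self_self_eps h₁ h₂] at h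
    exact ⟨h₁, h₂, neg_eq_zero.mp (congrArg Prod.snd h)⟩
  · rintro ⟨h₁, h₂, h⟩
    refine ⟨⟨h₁, h₂⟩, ?_⟩
    rw [assoc_self_self_eps h₁ h₂, h, neg_zero]
    rfl

theorem Pn_subset_En : Pn (n + 1) ⊆ En (n + 1) := by
  rintro α ⟨h₁, h₂, hb | ha⟩
  · exact mem_En_iff.mpr ⟨h₁, h₂, assoc_te0_eq_zero_of_mem_span h₁ hb⟩
  · refine mem_En_iff.mpr ⟨h₁, h₂, ?_⟩
    rw [← neg_eq_zero, ← assoc_te0_swap h₁ h₂]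
    exact assoc_te0_eq_zero_of_mem_span h₂ ha

theorem Xbar_subset_En : Xbar (n + 1) ⊆ En (n + 1) := by
  rintro α ⟨h₁, h₂, -, -, hab⟩
  obtain ⟨hba, hbta⟩ := inner_eq_zero_of_mul_eq_zero h₁ h₂ hab
  refine mem_En_iff.mpr ⟨h₁, h₂, ?_⟩
  rw [assoc_te0_of_inner_eq_zero h₁ h₂ hba hbta, hab, tilde_zero, smul_zero]

theorem eq_zero_of_mem_span_pair {x u v : CD n} (hx : x ∈ Submodule.span ℝ {u, v})
    (hu : CD.inner x u = 0) (hv : CD.inner x v = 0) : x = 0 := by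
  obtain ⟨r, s, hrs⟩ := Submodule.mem_span_pair.mp hx
  rw [← CD.inner_self_eq_zero]
  nth_rw 2 [← hrs]
  rw [CD.inner_add_right, CD.inner_smul_right, CD.inner_smul_right, hu, hv, mul_zero, mul_zero,
    add_zero]

theorem Pn_inter_Xbar : Pn (n + 1) ∩ Xbar (n + 1) = ∅ := by
  refine Set.eq_empty_of_forall_notMem ?_
  rintro α ⟨⟨-, -, hcol⟩, h₁, h₂, ha₀, hb₀, hab⟩
  obtain ⟨hba, hbta⟩ := inner_eq_zero_of_mul_eq_zero h₁ h₂ hab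
  rcases hcol with hb | ha
  · exact hb₀ (eq_zero_of_mem_span_pair hb hba hbta)
  · refine ha₀ (eq_zero_of_mem_span_pair ha ?_ ?_)
    · rw [CD.inner_comm, hba]
    · rw [CD.inner_comm, inner_tilde_left, hbta, neg_zero]

/-- For doubly pure `b`, this is the `ℍ_a^⊥`-component of `b`. -/
def orthPart (a b : CD (n + 1)) : CD (n + 1) :=
  b - (CD.inner b a / CD.inner a a) • a - (CD.inner b (tilde a) / CD.inner a a) • tilde a

theorem sub_orthPart_mem_span (a b : CD (n + 1)) :
    b - orthPart a b ∈ Submodule.span ℝ {a, tilde a} :=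
  Submodule.mem_span_pair.mpr ⟨_, _, by rw [orthPart]; abel⟩

theorem span_le_Ha (a : CD n) : Submodule.span ℝ {a, tilde a} ≤ Ha a :=
  Submodule.span_mono (by simp [Set.insert_subset_iff])

theorem inner_orthPart_self {a : CD (n + 1)} (ha : a ≠ 0) (b : CD (n + 1)) :
    CD.inner (orthPart a b) a = 0 := by
  have : CD.inner a a ≠ 0 := mt CD.inner_self_eq_zero.mp ha
  simp only [orthPart, CD.inner_sub_left, CD.inner_smul_left, inner_tilde_self]
  field_simp
  ring

theorem inner_orthPart_tilde {a : CD (n + 1)} (ha : a ≠ 0) (b : CD (n + 1)) :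
    CD.inner (orthPart a b) (tilde a) = 0 := by
  have : CD.inner a a ≠ 0 := mt CD.inner_self_eq_zero.mp ha
  simp only [orthPart, CD.inner_sub_left, CD.inner_smul_left, inner_tilde_tilde,
    CD.inner_comm a (tilde a), inner_tilde_self]
  field_simp
  ring

theorem orthPart_of_inner_eq_zero {a b : CD (n + 1)} (h₁ : CD.inner b a = 0)
    (h₂ : CD.inner b (tilde a) = 0) : orthPart a b = b := by
  simp [orthPart, h₁, h₂]

theorem IsDoublyPure.orthPart {a b : CD (n + 1)} (hb : IsDoublyPure b) (ha : IsDoublyPure a) :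
    IsDoublyPure (orthPart a b) := by
  obtain ⟨ha₁, ha₂⟩ := isDoublyPure_iff_inner.mp ha
  obtain ⟨hã₁, hã₂⟩ := isDoublyPure_iff_inner.mp ha.tilde
  obtain ⟨hb₁, hb₂⟩ := isDoublyPure_iff_inner.mp hb
  rw [isDoublyPure_iff_inner]
  simp [CD.orthPart, CD.inner_sub_left, CD.inner_smul_left, ha₁, ha₂, hã₁, hã₂, hb₁,
    hb₂]

theorem orthPart_mem_HaPerp {a b : CD (n + 1)} (ha₀ : a ≠ 0) (ha : IsDoublyPure a)
    (hb : IsDoublyPure b) : orthPart a b ∈ HaPerp a := by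
  obtain ⟨h₁, h₂⟩ := isDoublyPure_iff_inner.mp (hb.orthPart ha)
  exact mem_HaPerp_iff.mpr
    ⟨h₁, inner_orthPart_tilde ha₀ b, inner_orthPart_self ha₀ b, h₂⟩

theorem orthPart_ne_zero {a b : CD (n + 1)} (hb : b ∉ Submodule.span ℝ {a, tilde a}) :
    orthPart a b ≠ 0 := fun h => hb (by simpa [h] using sub_orthPart_mem_span a b)

theorem mul_orthPart_eq_zero {a b : CD (n + 1)} (ha₀ : a ≠ 0) (ha : IsDoublyPure a)
    (hb : IsDoublyPure b) (h : assoc a (te0 (n + 1)) b = 0) : a * orthPart a b = 0 := by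
  have key := assoc_te0_of_inner_eq_zero ha (hb.orthPart ha) (inner_orthPart_self ha₀ b)
    (inner_orthPart_tilde ha₀ b)
  have h₀ : assoc a (te0 (n + 1)) (orthPart a b) = 0 := by
    rw [← sub_sub_cancel b (orthPart a b), assoc_sub_right, h,
      assoc_te0_eq_zero_of_mem_span ha (sub_orthPart_mem_span a b), sub_zero]
  rw [h₀, eq_comm, smul_eq_zero, tilde_eq_zero] at key
  exact key.resolve_left (by norm_num)

instance instIsTopologicalAddGroup : (n : ℕ) → IsTopologicalAddGroup (CD n)
  | 0 => inferInstanceAs (IsTopologicalAddGroup ℝ)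
  | n + 1 =>
    letI := instIsTopologicalAddGroup n
    inferInstanceAs (IsTopologicalAddGroup (CD n × CD n))

instance instContinuousSMul : (n : ℕ) → ContinuousSMul ℝ (CD n)
  | 0 => inferInstanceAs (ContinuousSMul ℝ ℝ)
  | n + 1 =>
    letI := instContinuousSMul n
    inferInstanceAs (ContinuousSMul ℝ (CD n × CD n))

theorem continuous_inner : ∀ {n}, Continuous fun p : CD n × CD n => CD.inner p.1 p.2
  | 0 => continuous_mul
  | n + 1 => by
    have h := @continuous_inner n
    exact (h.comp (continuous_fst.fst.prodMk continuous_snd.fst)).add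
      (h.comp (continuous_fst.snd.prodMk continuous_snd.snd))

theorem continuous_tilde : Continuous (tilde : CD (n + 1) → CD (n + 1)) :=
  continuous_snd.neg.prodMk continuous_fst

def retraction (α : CD (n + 2)) : CD (n + 2) := pair α.1 (orthPart α.1 α.2)

theorem continuousOn_retraction :
    ContinuousOn (retraction : CD (n + 2) → CD (n + 2)) {α | α.1 ≠ 0} := by
  have ha : Continuous fun α : CD (n + 2) => α.1 := continuous_fst
  have hb : Continuous fun α : CD (n + 2) => α.2 := continuous_snd
  have hã : Continuous fun α : CD (n + 2) => tilde α.1 := continuous_tilde.comp ha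
  have hinner {f g : CD (n + 2) → CD (n + 1)} (hf : Continuous f) (hg : Continuous g) :
      ContinuousOn (fun α => CD.inner (f α) (g α)) {α | α.1 ≠ 0} :=
    (continuous_inner.comp (hf.prodMk hg)).continuousOn
  have hne : ∀ α ∈ {α : CD (n + 2) | α.1 ≠ 0}, CD.inner α.1 α.1 ≠ 0 :=
    fun α hα => mt CD.inner_self_eq_zero.mp hα
  unfold retraction orthPart pair
  exact ha.continuousOn.prodMk <|
    (hb.continuousOn.sub (((hinner hb ha).div (hinner ha ha) hne).smul ha.continuousOn)).sub
      (((hinner hb hã).div (hinner ha ha) hne).smul hã.continuousOn)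

theorem fst_ne_zero_of_mem_En_diff_Pn {α : CD (n + 2)} (hα : α ∈ En (n + 1) \ Pn (n + 1)) :
    α.1 ≠ 0 := by
  obtain ⟨h₁, h₂, -⟩ := mem_En_iff.mp hα.1
  intro h
  exact hα.2 ⟨h₁, h₂, Or.inr (h ▸ Submodule.zero_mem _)⟩

theorem retraction_mem_Xbar {α : CD (n + 2)} (hα : α ∈ En (n + 1) \ Pn (n + 1)) :
    retraction α ∈ Xbar (n + 1) := by
  obtain ⟨h₁, h₂, h⟩ := mem_En_iff.mp hα.1
  have ha₀ := fst_ne_zero_of_mem_En_diff_Pn hα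
  exact ⟨h₁, h₂.orthPart h₁, ha₀,
    orthPart_ne_zero fun hb => hα.2 ⟨h₁, h₂, Or.inl hb⟩,
    mul_orthPart_eq_zero ha₀ h₁ h₂ h⟩

theorem retraction_of_mem_Xbar {α : CD (n + 2)} (hα : α ∈ Xbar (n + 1)) :
    retraction α = α := by
  obtain ⟨h₁, h₂, -, -, hab⟩ := hα
  obtain ⟨hba, hbta⟩ := inner_eq_zero_of_mul_eq_zero h₁ h₂ hab
  rw [retraction, orthPart_of_inner_eq_zero hba hbta]
  rfl

end CD

/-- For `n ≥ 4`: (i) `P(n) ⊆ 𝔼_n`, `X̄_n ⊆ 𝔼_n`, `P(n) ∩ X̄_n = ∅`;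
(ii) the map `R(a,b) = (a,d)`, with `b = c + d` the orthogonal decomposition along
`A n = ℍ_a ⊕ ℍ_a^⊥`, is a well-defined continuous retraction
`𝔼_n ∖ P(n) → X̄_n`, fixing `X̄_n` pointwise. -/
theorem statement19 (n : ℕ) (hn : 4 ≤ n) :
    Pn n ⊆ En n ∧ Xbar n ⊆ En n ∧ Pn n ∩ Xbar n = ∅ ∧
    ∃ R : CD (n + 1) → CD (n + 1),
      ContinuousOn R (En n \ Pn n) ∧
      (∀ α ∈ En n \ Pn n,
        (R α).1 = α.1 ∧ (R α).2 ∈ CD.HaPerp α.1 ∧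
        α.2 - (R α).2 ∈ CD.Ha α.1 ∧ R α ∈ Xbar n) ∧
      (∀ α ∈ Xbar n, R α = α) := by
  obtain ⟨m, rfl⟩ : ∃ m, n = m + 1 := ⟨n - 1, by omega⟩
  refine ⟨CD.Pn_subset_En, CD.Xbar_subset_En, CD.Pn_inter_Xbar, CD.retraction,
    CD.continuousOn_retraction.mono fun α => CD.fst_ne_zero_of_mem_En_diff_Pn,
    fun α hα => ⟨rfl, ?_, CD.span_le_Ha _ (CD.sub_orthPart_mem_span _ _),
      CD.retraction_mem_Xbar hα⟩,
    fun α => CD.retraction_of_mem_Xbar⟩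
  obtain ⟨h₁, h₂, -⟩ := CD.mem_En_iff.mp hα.1
  exact CD.orthPart_mem_HaPerp (CD.fst_ne_zero_of_mem_En_diff_Pn hα) h₁ h₂
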